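/- Let s_U > 0, s_V > 0, ζ ∈ ℝ, and set σ = √(s_U² + s_V²), λ = s_U/s_V, ξ = ζ/(λσ). Then ∫_ℝ ω · (1/σ)[Φ(ξ − λω/σ) φ((ω + ζ)/σ) + Φ(−ξ − λω/σ) φ((ω − ζ)/σ)] dω = −2 s_U φ(ζ/s_U) + ζ(1 − 2Φ(ζ/s_U)). In words: the mean of the composite error term ε = V − U minus the conditional mean of V, under the closed-form conditional density given the control functions, equals minus the mean of the folded normal distribution with location ζ and scale s_U². -/

import Mathlib

open MeasureTheory

/-- The standard normal density. -/
noncomputable def stdNormalPDF (x : ℝ) : ℝ :=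
  (Real.sqrt (2 * Real.pi))⁻¹ * Real.exp (-x ^ 2 / 2)

/-- The standard normal cumulative distribution function. -/
noncomputable def stdNormalCDF (x : ℝ) : ℝ :=
  ∫ t in Set.Iio x, stdNormalPDF t

/-!
The substitution `ω = σ t - c` (`c = ±ζ`) turns each half of the density into
`(σ t - c) Φ(a - λ t) φ(t)` with `a = ξ + λ c / σ`, so the integral reduces to two Gaussian
identities for a standard normal `T`:
`E Φ(a - λ T) = Φ(a / √(1 + λ²))`, by Fubini and the convolution of two normal densities, and
`E [T Φ(a - λ T)] = -λ (1 + λ²)^(-1/2) φ(a / √(1 + λ²))`, by Stein's lemma (integration by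
parts against `-φ`, whose derivative is `t φ(t)`).
For the given parameters `√(1 + λ²) = σ / s_V`, so `a / √(1 + λ²) = ±ζ / s_U` and
`σ λ / √(1 + λ²) = s_U`; `φ(-x) = φ(x)` and `Φ(-x) = 1 - Φ(x)` then combine the two
halves.
-/

open Real Filter Set Topology

section Translation

variable {E : Type*} [NormedAddCommGroup E] [NormedSpace ℝ E]

lemma setIntegral_Iio_comp_sub_right (g : ℝ → E) (a b : ℝ) :
    ∫ x in Iio a, g (x - b) = ∫ x in Iio (a - b), g x := by
  have := (measurePreserving_sub_right volume b).setIntegral_preimage_emb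
    (measurableEmbedding_subRight b) g (Iio (a - b))
  simpa [preimage_sub_const_Iio] using this

lemma setIntegral_Iio_comp_div (g : ℝ → E) (a : ℝ) {c : ℝ} (hc : 0 < c) :
    ∫ x in Iio a, g (x / c) = c • ∫ x in Iio (a / c), g x := by
  have := Measure.setIntegral_comp_smul_of_pos volume g (Iio a) (inv_pos.2 hc)
  simpa [div_eq_inv_mul, LinearOrderedField.smul_Iio (inv_pos.2 hc)] using this

lemma integral_comp_add_div (g : ℝ → E) (c σ : ℝ) :
    ∫ x, g ((x + c) / σ) = |σ| • ∫ x, g x :=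
  (integral_add_right_eq_self (fun x => g (x / σ)) c).trans (Measure.integral_comp_div g σ)

end Translation

lemma stdNormalPDF_eq_mul_exp_neg_mul_sq (x : ℝ) :
    stdNormalPDF x = (√(2 * π))⁻¹ * exp (-(1 / 2) * x ^ 2) := by
  unfold stdNormalPDF; ring_nf

lemma stdNormalPDF_nonneg (x : ℝ) : 0 ≤ stdNormalPDF x := by
  unfold stdNormalPDF; positivity

lemma stdNormalPDF_le (x : ℝ) : stdNormalPDF x ≤ (√(2 * π))⁻¹ := by
  unfold stdNormalPDF
  exact mul_le_of_le_one_right (by positivity) (exp_le_one_iff.2 (by nlinarith [sq_nonneg x]))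

lemma stdNormalPDF_neg (x : ℝ) : stdNormalPDF (-x) = stdNormalPDF x := by
  simp [stdNormalPDF]

@[fun_prop]
lemma continuous_stdNormalPDF : Continuous stdNormalPDF := by
  unfold stdNormalPDF; fun_prop

lemma integrable_stdNormalPDF : Integrable stdNormalPDF := by
  rw [funext stdNormalPDF_eq_mul_exp_neg_mul_sq]
  exact (integrable_exp_neg_mul_sq (by norm_num : (0 : ℝ) < 1 / 2)).const_mul _

lemma integrable_id_mul_stdNormalPDF : Integrable fun x => x * stdNormalPDF x := by
  simp only [stdNormalPDF_eq_mul_exp_neg_mul_sq, mul_left_comm _ (√(2 * π))⁻¹]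
  exact (integrable_mul_exp_neg_mul_sq (by norm_num : (0 : ℝ) < 1 / 2)).const_mul _

lemma integral_stdNormalPDF : ∫ x, stdNormalPDF x = 1 := by
  simp only [stdNormalPDF_eq_mul_exp_neg_mul_sq]
  rw [integral_const_mul, integral_gaussian, show π / (1 / 2) = 2 * π by ring,
    inv_mul_cancel₀ (by positivity)]

lemma hasDerivAt_stdNormalPDF (x : ℝ) : HasDerivAt stdNormalPDF (-(x * stdNormalPDF x)) x := by
  have hexponent : HasDerivAt (fun y : ℝ => -y ^ 2 / 2) (-x) x := by
    simpa using ((hasDerivAt_pow 2 x).neg.div_const 2).congr_deriv (by ring : _ = -x)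
  exact ((hexponent.exp).const_mul (√(2 * π))⁻¹).congr_deriv (by unfold stdNormalPDF; ring)

lemma tendsto_stdNormalPDF_cocompact : Tendsto stdNormalPDF (cocompact ℝ) (𝓝 0) := by
  rw [funext stdNormalPDF_eq_mul_exp_neg_mul_sq]
  simpa using
    (tendsto_rpow_abs_mul_exp_neg_mul_sq_cocompact (by norm_num : (0 : ℝ) < 1 / 2) 0).const_mul
      (√(2 * π))⁻¹

lemma stdNormalCDF_nonneg (x : ℝ) : 0 ≤ stdNormalCDF x :=
  integral_nonneg stdNormalPDF_nonneg

lemma stdNormalCDF_le_one (x : ℝ) : stdNormalCDF x ≤ 1 :=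
  integral_stdNormalPDF ▸ setIntegral_le_integral integrable_stdNormalPDF
    (Eventually.of_forall stdNormalPDF_nonneg)

lemma stdNormalCDF_eq_setIntegral_Iic (x : ℝ) :
    stdNormalCDF x = ∫ t in Iic x, stdNormalPDF t :=
  setIntegral_congr_set Iio_ae_eq_Iic

lemma stdNormalCDF_sub_eq (a b : ℝ) :
    stdNormalCDF (a - b) = ∫ u in Iio a, stdNormalPDF (u - b) :=
  (setIntegral_Iio_comp_sub_right stdNormalPDF a b).symm

lemma stdNormalCDF_div (a : ℝ) {c : ℝ} (hc : 0 < c) :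
    stdNormalCDF (a / c) = c⁻¹ * ∫ u in Iio a, stdNormalPDF (u / c) := by
  rw [setIntegral_Iio_comp_div _ _ hc, smul_eq_mul, inv_mul_cancel_left₀ hc.ne', stdNormalCDF]

lemma hasDerivAt_stdNormalCDF (x : ℝ) : HasDerivAt stdNormalCDF (stdNormalPDF x) x := by
  have hinc : ∀ y, stdNormalCDF y = stdNormalCDF 0 + ∫ t in (0 : ℝ)..y, stdNormalPDF t := by
    intro y
    rw [stdNormalCDF_eq_setIntegral_Iic, stdNormalCDF_eq_setIntegral_Iic,
      ← intervalIntegral.integral_Iic_sub_Iic integrable_stdNormalPDF.integrableOn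
        integrable_stdNormalPDF.integrableOn]
    ring
  rw [funext hinc]
  exact (intervalIntegral.integral_hasDerivAt_right integrable_stdNormalPDF.intervalIntegrable
    (continuous_stdNormalPDF.stronglyMeasurableAtFilter _ _)
    continuous_stdNormalPDF.continuousAt).const_add _

@[fun_prop]
lemma continuous_stdNormalCDF : Continuous stdNormalCDF :=
  continuous_iff_continuousAt.2 fun x => (hasDerivAt_stdNormalCDF x).continuousAt

lemma stdNormalCDF_neg (x : ℝ) : stdNormalCDF (-x) = 1 - stdNormalCDF x := by
  have hsplit := integral_add_compl (measurableSet_Iic (a := x)) integrable_stdNormalPDF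
  rw [compl_Iic, integral_stdNormalPDF] at hsplit
  have htail : stdNormalCDF (-x) = ∫ t in Ioi x, stdNormalPDF t := by
    simpa only [stdNormalCDF_eq_setIntegral_Iic, stdNormalPDF_neg, neg_neg] using
      integral_comp_neg_Iic (-x) stdNormalPDF
  rw [htail, stdNormalCDF_eq_setIntegral_Iic]
  linarith

lemma Integrable.stdNormalCDF_comp_mul {α : Type*} [MeasurableSpace α] {μ : Measure α}
    {g h : α → ℝ} (hh : Integrable h μ) (hg : Measurable g) :
    Integrable (fun t => stdNormalCDF (g t) * h t) μ :=
  hh.bdd_mul (continuous_stdNormalCDF.measurable.comp hg).aestronglyMeasurable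
    (Eventually.of_forall fun t => by
      rw [norm_of_nonneg (stdNormalCDF_nonneg _)]; exact stdNormalCDF_le_one _)

lemma integrable_stdNormalPDF_sub_mul_mul_stdNormalPDF (a lam : ℝ) :
    Integrable fun t => stdNormalPDF (a - lam * t) * stdNormalPDF t :=
  integrable_stdNormalPDF.bdd_mul
    (by fun_prop : Continuous fun t => stdNormalPDF (a - lam * t)).aestronglyMeasurable
    (Eventually.of_forall fun t => by
      rw [norm_of_nonneg (stdNormalPDF_nonneg _)]; exact stdNormalPDF_le _)

lemma integral_stdNormalPDF_sub_mul_mul_stdNormalPDF (a lam : ℝ) :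
    ∫ t, stdNormalPDF (a - lam * t) * stdNormalPDF t =
      (√(1 + lam ^ 2))⁻¹ * stdNormalPDF (a / √(1 + lam ^ 2)) := by
  set k := 1 + lam ^ 2
  have hk : 0 < k := by positivity
  have hsq : √k ^ 2 = k := sq_sqrt hk.le
  have hcomplete : ∀ t, stdNormalPDF (a - lam * t) * stdNormalPDF t =
      (√(2 * π))⁻¹ * stdNormalPDF (a / √k) * exp (-(k / 2) * (t - a * lam / k) ^ 2) := by
    intro t
    have hexponent : -(a - lam * t) ^ 2 / 2 + -t ^ 2 / 2 =
        -(a / √k) ^ 2 / 2 + -(k / 2) * (t - a * lam / k) ^ 2 := by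
      rw [div_pow, hsq]; field_simp; ring
    simp only [stdNormalPDF]
    rw [mul_mul_mul_comm, ← exp_add, hexponent, exp_add]
    ring
  simp_rw [hcomplete]
  rw [integral_const_mul, integral_sub_right_eq_self (fun s => exp (-(k / 2) * s ^ 2)),
    integral_gaussian, show π / (k / 2) = 2 * π / k by field_simp, sqrt_div (by positivity)]
  field_simp

lemma integral_stdNormalCDF_sub_mul_mul_stdNormalPDF (a lam : ℝ) :
    ∫ t, stdNormalCDF (a - lam * t) * stdNormalPDF t = stdNormalCDF (a / √(1 + lam ^ 2)) := by
  set F : ℝ → ℝ → ℝ := fun t u => stdNormalPDF (u - lam * t) * stdNormalPDF t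
  have hF_nonneg : ∀ t u, 0 ≤ F t u := fun t u =>
    mul_nonneg (stdNormalPDF_nonneg _) (stdNormalPDF_nonneg _)
  have hinner : ∀ t, ∫ u in Iio a, F t u = stdNormalCDF (a - lam * t) * stdNormalPDF t := by
    intro t
    rw [stdNormalCDF_sub_eq, integral_mul_const]
  have hF : Integrable (Function.uncurry F) (volume.prod (volume.restrict (Iio a))) := by
    have hFcont : Continuous (Function.uncurry F) := by fun_prop
    have hslice : ∀ t, Integrable (fun u => F t u) (volume.restrict (Iio a)) := fun t =>
      ((integrable_stdNormalPDF.comp_sub_right (lam * t)).mul_const _).restrict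
    refine (integrable_prod_iff hFcont.aestronglyMeasurable).2
      ⟨Eventually.of_forall hslice, ?_⟩
    show Integrable fun t => ∫ u in Iio a, ‖F t u‖
    simp_rw [norm_of_nonneg (hF_nonneg _ _), hinner]
    exact Integrable.stdNormalCDF_comp_mul integrable_stdNormalPDF (by fun_prop)
  have hκ : 0 < √(1 + lam ^ 2) := by positivity
  calc ∫ t, stdNormalCDF (a - lam * t) * stdNormalPDF t
      = ∫ t, ∫ u in Iio a, F t u := by simp_rw [hinner]
    _ = ∫ u in Iio a, ∫ t, F t u := integral_integral_swap hF
    _ = ∫ u in Iio a, (√(1 + lam ^ 2))⁻¹ * stdNormalPDF (u / √(1 + lam ^ 2)) := by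
        simp_rw [F, integral_stdNormalPDF_sub_mul_mul_stdNormalPDF]
    _ = stdNormalCDF (a / √(1 + lam ^ 2)) := by rw [integral_const_mul, stdNormalCDF_div _ hκ]

lemma integral_stdNormalCDF_sub_mul_mul_id_mul_stdNormalPDF (a lam : ℝ) :
    ∫ t, stdNormalCDF (a - lam * t) * (t * stdNormalPDF t) =
      -lam * ((√(1 + lam ^ 2))⁻¹ * stdNormalPDF (a / √(1 + lam ^ 2))) := by
  have hu : ∀ t, HasDerivAt (fun t => stdNormalCDF (a - lam * t))
      (-lam * stdNormalPDF (a - lam * t)) t := fun t => by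
    simpa [mul_comm, Function.comp_def] using
      (hasDerivAt_stdNormalCDF (a - lam * t)).comp t (((hasDerivAt_id t).const_mul lam).const_sub a)
  have hv : ∀ t, HasDerivAt (fun t => -stdNormalPDF t) (t * stdNormalPDF t) t := fun t =>
    (hasDerivAt_stdNormalPDF t).neg.congr_deriv (neg_neg _)
  have hlim : ∀ l ≤ cocompact ℝ,
      Tendsto (fun t => stdNormalCDF (a - lam * t) * -stdNormalPDF t) l (𝓝 0) := by
    intro l hl
    refine squeeze_zero_norm (fun t => ?_)
      (by simpa using (tendsto_stdNormalPDF_cocompact.mono_left hl).norm)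
    rw [norm_mul, norm_neg, norm_of_nonneg (stdNormalCDF_nonneg _)]
    exact mul_le_of_le_one_left (norm_nonneg _) (stdNormalCDF_le_one _)
  rw [integral_mul_deriv_eq_deriv_mul (fun t _ => hu t) (fun t _ => hv t)
    (Integrable.stdNormalCDF_comp_mul integrable_id_mul_stdNormalPDF (by fun_prop))
    (((integrable_stdNormalPDF_sub_mul_mul_stdNormalPDF a lam).const_mul lam).congr
      (Eventually.of_forall fun t => by simp only [Pi.mul_apply]; ring))
    (hlim _ atBot_le_cocompact) (hlim _ atTop_le_cocompact)]
  simp only [mul_neg, neg_mul, integral_neg, mul_assoc, integral_const_mul,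
    integral_stdNormalPDF_sub_mul_mul_stdNormalPDF]
  ring

section Affine

variable (σ c a lam : ℝ)

lemma integrable_affine_mul_stdNormalCDF_sub_mul_mul_stdNormalPDF :
    Integrable fun t => (σ * t - c) * (stdNormalCDF (a - lam * t) * stdNormalPDF t) := by
  have hmeas : Measurable fun t : ℝ => a - lam * t := by fun_prop
  refine (((Integrable.stdNormalCDF_comp_mul integrable_id_mul_stdNormalPDF hmeas).const_mul
    σ).sub ((Integrable.stdNormalCDF_comp_mul integrable_stdNormalPDF hmeas).const_mul c)).congr
    (Eventually.of_forall fun t => ?_)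
  simp only [Pi.sub_apply]
  ring

lemma integral_affine_mul_stdNormalCDF_sub_mul_mul_stdNormalPDF :
    ∫ t, (σ * t - c) * (stdNormalCDF (a - lam * t) * stdNormalPDF t) =
      -(σ * lam * (√(1 + lam ^ 2))⁻¹) * stdNormalPDF (a / √(1 + lam ^ 2)) -
        c * stdNormalCDF (a / √(1 + lam ^ 2)) := by
  have hmeas : Measurable fun t : ℝ => a - lam * t := by fun_prop
  have hsplit : ∀ t, (σ * t - c) * (stdNormalCDF (a - lam * t) * stdNormalPDF t) =
      σ * (stdNormalCDF (a - lam * t) * (t * stdNormalPDF t)) -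
        c * (stdNormalCDF (a - lam * t) * stdNormalPDF t) := fun t => by ring
  simp_rw [hsplit]
  rw [integral_sub
      ((Integrable.stdNormalCDF_comp_mul integrable_id_mul_stdNormalPDF hmeas).const_mul σ)
      ((Integrable.stdNormalCDF_comp_mul integrable_stdNormalPDF hmeas).const_mul c),
    integral_const_mul, integral_const_mul, integral_stdNormalCDF_sub_mul_mul_id_mul_stdNormalPDF,
    integral_stdNormalCDF_sub_mul_mul_stdNormalPDF]
  ring

end Affine

section Component

variable (ξ lam c : ℝ) {σ : ℝ}

lemma id_mul_stdNormalCDF_mul_stdNormalPDF_eq_comp_div (hσ : σ ≠ 0) (ω : ℝ) :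
    ω * ((1 / σ) * (stdNormalCDF (ξ - lam * ω / σ) * stdNormalPDF ((ω + c) / σ))) =
      σ⁻¹ * (fun t => (σ * t - c) *
        (stdNormalCDF (ξ + lam * c / σ - lam * t) * stdNormalPDF t)) ((ω + c) / σ) := by
  have hlin : ξ + lam * c / σ - lam * ((ω + c) / σ) = ξ - lam * ω / σ := by field_simp; ring
  simp only [hlin, mul_div_cancel₀ _ hσ, add_sub_cancel_right]
  ring

lemma integrable_id_mul_stdNormalCDF_mul_stdNormalPDF (hσ : σ ≠ 0) :
    Integrable fun ω =>
      ω * ((1 / σ) * (stdNormalCDF (ξ - lam * ω / σ) * stdNormalPDF ((ω + c) / σ))) := by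
  simp_rw [id_mul_stdNormalCDF_mul_stdNormalPDF_eq_comp_div ξ lam c hσ]
  exact (((integrable_affine_mul_stdNormalCDF_sub_mul_mul_stdNormalPDF σ c _ lam).comp_div
    hσ).comp_add_right c).const_mul _

lemma integral_id_mul_stdNormalCDF_mul_stdNormalPDF (hσ : 0 < σ) :
    ∫ ω, ω * ((1 / σ) * (stdNormalCDF (ξ - lam * ω / σ) * stdNormalPDF ((ω + c) / σ))) =
      -(σ * lam * (√(1 + lam ^ 2))⁻¹) *
          stdNormalPDF ((ξ + lam * c / σ) / √(1 + lam ^ 2)) -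
        c * stdNormalCDF ((ξ + lam * c / σ) / √(1 + lam ^ 2)) := by
  set G : ℝ → ℝ := fun t =>
    (σ * t - c) * (stdNormalCDF (ξ + lam * c / σ - lam * t) * stdNormalPDF t)
  have hG : (fun ω => ω * ((1 / σ) *
      (stdNormalCDF (ξ - lam * ω / σ) * stdNormalPDF ((ω + c) / σ)))) =
      fun ω => σ⁻¹ * G ((ω + c) / σ) :=
    funext (id_mul_stdNormalCDF_mul_stdNormalPDF_eq_comp_div ξ lam c hσ.ne')
  rw [hG, integral_const_mul, integral_comp_add_div, abs_of_pos hσ, smul_eq_mul,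
    inv_mul_cancel_left₀ hσ.ne', integral_affine_mul_stdNormalCDF_sub_mul_mul_stdNormalPDF]

end Component

/-- the mean of the centered composite error term under its closed-form
conditional density equals minus the mean of the folded normal distribution with location
`ζ` and scale `s_U²`. -/
theorem mean_composite_error
    (sU sV ζ : ℝ) (hU : 0 < sU) (hV : 0 < sV)
    (σ : ℝ) (hσ : σ = Real.sqrt (sU ^ 2 + sV ^ 2))
    (lam : ℝ) (hlam : lam = sU / sV)
    (ξ : ℝ) (hξ : ξ = ζ / (lam * σ)) :
    (∫ ω : ℝ,
        ω * ((1 / σ) *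
          (stdNormalCDF (ξ - lam * ω / σ) * stdNormalPDF ((ω + ζ) / σ) +
            stdNormalCDF (-ξ - lam * ω / σ) * stdNormalPDF ((ω - ζ) / σ)))) =
      -2 * sU * stdNormalPDF (ζ / sU) + ζ * (1 - 2 * stdNormalCDF (ζ / sU)) := by
  have hσ0 : 0 < σ := hσ ▸ sqrt_pos.2 (by positivity)
  have hσsq : σ ^ 2 = sU ^ 2 + sV ^ 2 := hσ ▸ sq_sqrt (by positivity)
  have hκ : √(1 + lam ^ 2) = σ / sV := by
    rw [← sqrt_sq (div_pos hσ0 hV).le, hlam]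
    congr 1
    field_simp
    linarith
  have hscale : σ * lam * (√(1 + lam ^ 2))⁻¹ = sU := by
    rw [hκ, hlam]; field_simp
  have hloc : (ξ + lam * ζ / σ) / √(1 + lam ^ 2) = ζ / sU := by
    rw [hκ, hξ, hlam]
    field_simp
    linear_combination (-ζ) * hσsq
  have hloc' : (-ξ + lam * -ζ / σ) / √(1 + lam ^ 2) = -(ζ / sU) := by
    rw [← hloc]; ring
  have hint₂ := integrable_id_mul_stdNormalCDF_mul_stdNormalPDF (-ξ) lam (-ζ) hσ0.ne'
  have hmean₂ := integral_id_mul_stdNormalCDF_mul_stdNormalPDF (-ξ) lam (-ζ) hσ0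
  simp only [← sub_eq_add_neg] at hint₂ hmean₂
  simp_rw [mul_add]
  rw [integral_add (integrable_id_mul_stdNormalCDF_mul_stdNormalPDF ξ lam ζ hσ0.ne') hint₂,
    integral_id_mul_stdNormalCDF_mul_stdNormalPDF ξ lam ζ hσ0, hmean₂, hscale, hloc, hloc',
    stdNormalPDF_neg, stdNormalCDF_neg]
  ring
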